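/- Let K be an n×n real symmetric positive semidefinite matrix partitioned into blocks A (m×m), B (m×(n-m)), Bᵀ, C ((n-m)×(n-m)), and suppose A is invertible. If rank K = rank A = m, then C = Bᵀ A⁻¹ B (the Nyström approximation is exact). -/

import Mathlib

/-!
Block Gaussian elimination `K = L * diag(A, C - Bᵀ A⁻¹ B) * U` with unitriangular `L`, `U` gives
Guttman's rank additivity `rank K = rank A + rank (C - Bᵀ A⁻¹ B)`. If `rank K = m = rank A`, the
Schur complement has rank zero, so it vanishes.
-/

open Matrix

theorem Submodule.finrank_prod_eq {K M N : Type*} [Field K] [AddCommGroup M] [Module K M]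
    [AddCommGroup N] [Module K N] (p : Submodule K M) (q : Submodule K N)
    [FiniteDimensional K p] [FiniteDimensional K q] :
    Module.finrank K (p.prod q) = Module.finrank K p + Module.finrank K q := by
  have hrange : p.prod q = LinearMap.range (p.subtype.prodMap q.subtype) := by
    rw [LinearMap.range_prodMap, Submodule.range_subtype, Submodule.range_subtype]
  rw [hrange, LinearMap.finrank_range_of_inj, Module.finrank_prod]
  exact p.injective_subtype.prodMap q.injective_subtype

namespace Matrix

variable {K : Type*} [Field K]

theorem rank_fromBlocks_zero_zero {m₁ m₂ n₁ n₂ : Type*} [Fintype n₁] [Fintype n₂]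
    (A : Matrix m₁ n₁ K) (D : Matrix m₂ n₂ K) :
    (fromBlocks A 0 0 D).rank = A.rank + D.rank := by
  have hfactor : (fromBlocks A 0 0 D).mulVecLin =
      (LinearEquiv.sumArrowLequivProdArrow m₁ m₂ K K).symm.toLinearMap ∘ₗ
        A.mulVecLin.prodMap D.mulVecLin ∘ₗ
        (LinearEquiv.sumArrowLequivProdArrow n₁ n₂ K K).toLinearMap := by
    ext x (i | i) <;> simp [fromBlocks_mulVec] <;> rfl
  rw [rank, hfactor, LinearMap.range_comp, LinearEquiv.finrank_map_eq,
    LinearMap.range_comp_of_range_eq_top _ (LinearEquiv.range _), LinearMap.range_prodMap,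
    Submodule.finrank_prod_eq]
  rfl

theorem rank_eq_zero_iff {m n : Type*} [Fintype n] {A : Matrix m n K} :
    A.rank = 0 ↔ A = 0 := by
  classical
  rw [rank, Submodule.finrank_eq_zero, LinearMap.range_eq_bot, ← toLin'_apply',
    LinearEquiv.map_eq_zero_iff]

theorem rank_fromBlocks_of_invertible₁₁ {l m n : Type*} [Fintype l] [Fintype m] [Fintype n]
    [DecidableEq l] [DecidableEq m] [DecidableEq n]
    (A : Matrix m m K) (B : Matrix m n K) (C : Matrix l m K) (D : Matrix l n K) [Invertible A] :
    (fromBlocks A B C D).rank = Fintype.card m + (D - C * ⅟A * B).rank := by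
  rw [fromBlocks_eq_of_invertible₁₁, rank_mul_eq_left_of_isUnit_det,
    rank_mul_eq_right_of_isUnit_det, rank_fromBlocks_zero_zero,
    rank_of_isUnit A (isUnit_of_invertible A)]
  all_goals simp

end Matrix

theorem stmt_11_general (m l : ℕ) (A : Matrix (Fin m) (Fin m) ℝ)
    (B : Matrix (Fin m) (Fin l) ℝ) (C : Matrix (Fin l) (Fin l) ℝ)
    (hA : IsUnit A.det)
    (hrank : (Matrix.fromBlocks A B Bᵀ C).rank = m) :
    C = Bᵀ * A⁻¹ * B := by
  let _ := A.invertibleOfIsUnitDet hA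
  have hschur := rank_fromBlocks_of_invertible₁₁ A B Bᵀ C
  rw [hrank, Fintype.card_fin, left_eq_add, Matrix.rank_eq_zero_iff, sub_eq_zero,
    invOf_eq_nonsing_inv] at hschur
  exact hschur

/-- Exactness of the Nyström approximation: if the positive semidefinite matrix
`K = [[A, B], [Bᵀ, C]]` has `A` invertible and `rank K = m`, then
`C = Bᵀ A⁻¹ B`. -/
theorem stmt_11 (m l : ℕ) (A : Matrix (Fin m) (Fin m) ℝ)
    (B : Matrix (Fin m) (Fin l) ℝ) (C : Matrix (Fin l) (Fin l) ℝ)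
    (hK : (Matrix.fromBlocks A B Bᵀ C).PosSemidef)
    (hA : IsUnit A.det)
    (hrank : (Matrix.fromBlocks A B Bᵀ C).rank = m) :
    C = Bᵀ * A⁻¹ * B :=
  stmt_11_general m l A B C hA hrank
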